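/- (Theorem 1, k-cycle case, bounded gradients.) Let (z_t)_{t\ge 1} be an orbit of F, i.e. z_{t+1} = F(z_t). Suppose there exist k \ge 1 pairwise distinct points p_0, \dots, p_{k-1} \in \mathbb{R}^M with F(p_s) = p_{(s+1) \bmod k}, none of which has any zero component, such that for each residue s \in \{0,\dots,k-1\} the subsequence (z_{nk+s})_{n\ge 1} converges to one of the points p_0,\dots,p_{k-1}, and suppose \max_{0\le s\le k-1} \|W_\Omega(p_s)\|_2 < 1. Fix m, k' \in \{1,\dots,M\} and define (G_t)_{t\ge 1} by G_1 = 0 and G_{t+1} = \varphi(z_t)_{k'}\, e_m + W_\Omega(z_t)\, G_t, where e_m is the m-th standard basis vector (G_t equals \partial z_t/\partial W_{m k'}). Then \sup_t \|G_t\| < \infty. -/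

import Mathlib

/-!
Near a point with no zero component the sign pattern `D(·)` is locally constant, so along each
residue class mod `k` the Jacobians `W_Ω(z_t)` eventually coincide with `W_Ω(p_j)` for a cycle
point `p_j`, while the inputs `φ(z_t)_{k'}` stay bounded. Hence eventually
`‖G_{t+1}‖ ≤ B + ρ ‖G_t‖` with `ρ = max_s ‖W_Ω(p_s)‖₂ < 1`, and such a sequence never exceeds
`max (‖G_T‖, B / (1 - ρ))` from time `T` on.
-/

open Matrix Filter Topology

/-- The operator 2-norm (largest singular value) of a real matrix. -/
noncomputable def opNorm2 {m n : Type*} [Fintype m] [Fintype n] [DecidableEq n]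
    (A : Matrix m n ℝ) : ℝ :=
  ‖LinearMap.toContinuousLinearMap (Matrix.toEuclideanLin (𝕜 := ℝ) A)‖

/-- Euclidean norm of a real vector. -/
noncomputable def vnorm {n : Type*} [Fintype n] (v : n → ℝ) : ℝ :=
  Real.sqrt (∑ i, v i ^ 2)

/-- Componentwise ReLU. -/
noncomputable def relu {n : Type*} (z : n → ℝ) : n → ℝ := fun i => max 0 (z i)

/-- `Dmat z` is the diagonal 0–1 matrix with `(Dmat z) i i = 1` iff `z i > 0`. -/
noncomputable def Dmat {n : Type*} [Fintype n] [DecidableEq n] (z : n → ℝ) :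
    Matrix n n ℝ :=
  Matrix.diagonal (fun i => if 0 < z i then (1 : ℝ) else 0)

/-- `W_Ω(z) = A + W D(z)`. -/
noncomputable def Wom {n : Type*} [Fintype n] [DecidableEq n]
    (A W : Matrix n n ℝ) (z : n → ℝ) : Matrix n n ℝ :=
  A + W * Dmat z

/-- The deterministic, input-free PLRNN map `F(z) = A z + W φ(z) + h`. -/
noncomputable def plrnn {n : Type*} [Fintype n] [DecidableEq n]
    (A W : Matrix n n ℝ) (h : n → ℝ) (z : n → ℝ) : n → ℝ :=
  A.mulVec z + W.mulVec (relu z) + h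

theorem bddAbove_range_of_eventually_le_mul_add {u : ℕ → ℝ} {ρ B : ℝ} (hρ₀ : 0 ≤ ρ)
    (hρ₁ : ρ < 1) (h : ∀ᶠ t in atTop, u (t + 1) ≤ B + ρ * u t) : BddAbove (Set.range u) := by
  obtain ⟨T, hT⟩ := eventually_atTop.mp h
  set K := max (u T) (B / (1 - ρ))
  have hBK : B + ρ * K ≤ K := by
    have : B ≤ K * (1 - ρ) := (div_le_iff₀ (by linarith)).mp (le_max_right _ _)
    linarith
  have hbound : ∀ t ≥ T, u t ≤ K := by
    intro t ht
    induction t, ht using Nat.le_induction with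
    | base => exact le_max_left _ _
    | succ t ht ih => exact (hT t ht).trans (by linarith [mul_le_mul_of_nonneg_left ih hρ₀])
  exact (isBoundedUnder_of_eventually_le (eventually_atTop.mpr ⟨T, hbound⟩)).bddAbove_range

theorem Nat.eventually_atTop_of_forall_residue {k : ℕ} (hk : 0 < k) {P : ℕ → Prop}
    (h : ∀ s : Fin k, ∀ᶠ n in atTop, P (n * k + s)) : ∀ᶠ t in atTop, P t := by
  obtain ⟨N, hN⟩ := eventually_atTop.mp (eventually_all.mpr h)
  refine eventually_atTop.mpr ⟨N * k, fun t ht => ?_⟩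
  have hP := hN (t / k) ((Nat.le_div_iff_mul_le hk).mpr ht) ⟨t % k, Nat.mod_lt t hk⟩
  rwa [Fin.val_mk, Nat.div_add_mod'] at hP

theorem Filter.Tendsto.eventually_pos_iff {α : Type*} {l : Filter α} {f : α → ℝ} {x : ℝ}
    (hf : Tendsto f l (𝓝 x)) (hx : x ≠ 0) : ∀ᶠ a in l, (0 < f a ↔ 0 < x) := by
  rcases hx.lt_or_gt with hx | hx
  · exact (hf.eventually (gt_mem_nhds hx)).mono fun a ha => iff_of_false ha.asymm hx.asymm
  · exact (hf.eventually (lt_mem_nhds hx)).mono fun a ha => iff_of_true ha hx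

theorem Filter.Tendsto.eventually_Dmat_eq {α n : Type*} [Fintype n] [DecidableEq n]
    {l : Filter α} {f : α → n → ℝ} {x : n → ℝ} (hf : Tendsto f l (𝓝 x)) (hx : ∀ i, x i ≠ 0) :
    ∀ᶠ a in l, Dmat (f a) = Dmat x := by
  have hsign : ∀ᶠ a in l, ∀ i, (0 < f a i ↔ 0 < x i) :=
    eventually_all.mpr fun i =>
      ((continuous_apply i).tendsto x |>.comp hf).eventually_pos_iff (hx i)
  exact hsign.mono fun a ha => congrArg diagonal (funext fun i => if_congr (ha i) rfl rfl)

section vnorm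

variable {n : Type*} [Fintype n]

theorem vnorm_eq_norm_toLp (v : n → ℝ) : vnorm v = ‖WithLp.toLp 2 v‖ := by
  simp [EuclideanSpace.norm_eq, vnorm, Real.norm_eq_abs, sq_abs]

theorem vnorm_nonneg (v : n → ℝ) : 0 ≤ vnorm v :=
  Real.sqrt_nonneg _

theorem vnorm_add_le (v w : n → ℝ) : vnorm (v + w) ≤ vnorm v + vnorm w := by
  simpa only [vnorm_eq_norm_toLp, WithLp.toLp_add] using norm_add_le _ _

theorem vnorm_smul (c : ℝ) (v : n → ℝ) : vnorm (c • v) = |c| * vnorm v := by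
  simp only [vnorm_eq_norm_toLp, WithLp.toLp_smul, norm_smul, Real.norm_eq_abs]

theorem vnorm_single [DecidableEq n] (i : n) : vnorm (Pi.single i (1 : ℝ)) = 1 := by
  simp [vnorm, Pi.single_apply, ite_pow]

theorem vnorm_mulVec_le [DecidableEq n] (L : Matrix n n ℝ) (v : n → ℝ) :
    vnorm (L *ᵥ v) ≤ opNorm2 L * vnorm v := by
  simp only [vnorm_eq_norm_toLp]
  exact (LinearMap.toContinuousLinearMap (toEuclideanLin L)).le_opNorm (WithLp.toLp 2 v)

theorem vnorm_smul_single_add_mulVec_le [DecidableEq n] (c : ℝ) (i : n) (L : Matrix n n ℝ)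
    (v : n → ℝ) : vnorm (c • Pi.single i 1 + L *ᵥ v) ≤ |c| + opNorm2 L * vnorm v := by
  refine (vnorm_add_le _ _).trans ?_
  rw [vnorm_smul, vnorm_single, mul_one]
  exact add_le_add_right (vnorm_mulVec_le L v) _

end vnorm

theorem opNorm2_nonneg {n : Type*} [Fintype n] [DecidableEq n] (L : Matrix n n ℝ) :
    0 ≤ opNorm2 L :=
  norm_nonneg _

theorem gradients_bounded_cycle_general {M : ℕ} (A W : Matrix (Fin M) (Fin M) ℝ)
    (z : ℕ → Fin M → ℝ)
    (k : ℕ) (hk : 0 < k) (p : Fin k → Fin M → ℝ)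
    (hnz : ∀ (s : Fin k) (i : Fin M), p s i ≠ 0)
    (hsub : ∀ s : Fin k, ∃ j : Fin k,
      Tendsto (fun n : ℕ => z (n * k + (s : ℕ))) atTop (𝓝 (p j)))
    (hnorm : ∀ s : Fin k, opNorm2 (Wom A W (p s)) < 1)
    (m k' : Fin M) (G : ℕ → Fin M → ℝ)
    (hGrec : ∀ t, 1 ≤ t →
      G (t + 1) = relu (z t) k' • (Pi.single m 1 : Fin M → ℝ) + (Wom A W (z t)).mulVec (G t)) :
    ∃ C : ℝ, ∀ t, vnorm (G t) ≤ C := by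
  have : Nonempty (Fin k) := ⟨⟨0, hk⟩⟩
  obtain ⟨s₀, hs₀⟩ := Finite.exists_max fun s => opNorm2 (Wom A W (p s))
  set ρ := opNorm2 (Wom A W (p s₀))
  obtain ⟨B, hB⟩ := Finite.bddAbove_range fun s => |relu (p s) k'| + 1
  choose j hj using hsub
  have hgood : ∀ᶠ t in atTop, opNorm2 (Wom A W (z t)) ≤ ρ ∧ |relu (z t) k'| ≤ B := by
    refine Nat.eventually_atTop_of_forall_residue hk fun s => ?_
    have hinput : Tendsto (fun n => |relu (z (n * k + s)) k'|) atTop (𝓝 |relu (p (j s)) k'|) :=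
      ((continuous_const.max (continuous_apply k')).abs.tendsto _).comp (hj s)
    filter_upwards [(hj s).eventually_Dmat_eq (hnz (j s)),
      hinput.eventually (gt_mem_nhds (lt_add_one _))] with n hD hb
    exact ⟨by rw [Wom, hD]; exact hs₀ (j s), hb.le.trans (hB (Set.mem_range_self _))⟩
  have hstep : ∀ᶠ t in atTop, vnorm (G (t + 1)) ≤ B + ρ * vnorm (G t) := by
    filter_upwards [hgood, eventually_ge_atTop 1] with t ⟨hW, hb⟩ ht
    rw [hGrec t ht]
    refine (vnorm_smul_single_add_mulVec_le _ _ _ _).trans ?_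
    gcongr
    exact vnorm_nonneg _
  obtain ⟨C, hC⟩ := bddAbove_range_of_eventually_le_mul_add (u := fun t => vnorm (G t))
    (opNorm2_nonneg _) (hnorm s₀) hstep
  exact ⟨C, fun t => hC (Set.mem_range_self t)⟩

/-- Theorem 1, k-cycle case, bounded gradients: if the orbit `z` converges
(along each residue class mod `k`) to a stable `k`-cycle `p 0, …, p (k-1)` of pairwise
distinct points with no zero component, with `‖W_Ω(p s)‖₂ < 1` for every `s`, then the
derivative sequence `G` w.r.t. the weight `W m k'` (with `G 1 = 0` and
`G (t+1) = φ(z t)_{k'} e_m + W_Ω(z t) G t`) is bounded in norm. -/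
theorem gradients_bounded_cycle {M : ℕ} (A W : Matrix (Fin M) (Fin M) ℝ)
    (hA : A.IsDiag) (hWd : ∀ i, W i i = 0) (h : Fin M → ℝ)
    (z : ℕ → Fin M → ℝ) (horb : ∀ t, 1 ≤ t → z (t + 1) = plrnn A W h (z t))
    (k : ℕ) (hk : 0 < k) (p : Fin k → Fin M → ℝ) (hinj : Function.Injective p)
    (hcyc : ∀ s : Fin k, plrnn A W h (p s) = p ⟨((s : ℕ) + 1) % k, Nat.mod_lt _ hk⟩)
    (hnz : ∀ (s : Fin k) (i : Fin M), p s i ≠ 0)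
    (hsub : ∀ s : Fin k, ∃ j : Fin k,
      Tendsto (fun n : ℕ => z (n * k + (s : ℕ))) atTop (𝓝 (p j)))
    (hnorm : ∀ s : Fin k, opNorm2 (Wom A W (p s)) < 1)
    (m k' : Fin M) (G : ℕ → Fin M → ℝ) (hG1 : G 1 = 0)
    (hGrec : ∀ t, 1 ≤ t →
      G (t + 1) = relu (z t) k' • (Pi.single m 1 : Fin M → ℝ) + (Wom A W (z t)).mulVec (G t)) :
    ∃ C : ℝ, ∀ t, vnorm (G t) ≤ C :=
  gradients_bounded_cycle_general A W z k hk p hnz hsub hnorm m k' G hGrec
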